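/- arXiv:2002.12584 — 6 statements merged into one kernel-verified Lean document; each statement's English description precedes it below -/
import Mathlib

section
/- Let f_i, g_i : ℝⁿ → ℝ be convex and differentiable, h_i : ℝⁿ → ℝ affine, a_{ij} = a_{ji} ≥ 0 with a_{ii} = 0, L = diag(A·1_N) − A, 𝐋 = L ⊗ I_n, and define the Lagrangian L_g(x, λ, μ) := Σ_i [ f_i(x_i) + λ_i² g_i(x_i) + μ_i h_i(x_i) ] + xᵀ𝐋x. Suppose (x*, ξ*, λ*, μ*) satisfies the KKT condition (★): 𝐋x* = 0 (so x*_i = z* for all i); h_i(z*) = 0, g_i(z*) ≤ 0, (λ*_i)² g_i(z*) = 0 for all i; and ∇f_i(z*) + (λ*_i)² ∇g_i(z*) + μ*_i ∇h_i(z*) + Σ_j a_{ij}(ξ*_j − ξ*_i) = 0 for all i. Then for every λ, μ ∈ ℝ^N and every x ∈ ℝ^{Nn} with 𝐋x = 0, one has L_g(x*, λ, μ) ≤ L_g(x*, λ*, μ*) ≤ L_g(x, λ*, μ*). -/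
/-!
Where `𝐋x = 0` the quadratic term vanishes and the Lagrangian is `Σᵢ φᵢ(xᵢ)`, with
`φᵢ = fᵢ + λᵢ² gᵢ + μᵢ hᵢ` convex. By the stationarity part of (★), `∇φᵢ(z*) = (L ξ*)ᵢ`, so the first-order convexity
inequality bounds `Σᵢ φᵢ(xᵢ)` below by `Σᵢ φᵢ(z*) + Σᵢ ⟪(L ξ*)ᵢ, xᵢ - z*⟫`; the Laplacian is
self-adjoint and kills constants, so the correction is `Σᵢ ⟪ξ*ᵢ, (L x)ᵢ⟫ = 0`. The inequality in
the multipliers is complementary slackness: `λᵢ² gᵢ(z*) ≤ 0 = (λ*ᵢ)² gᵢ(z*)`, and `hᵢ(z*) = 0`.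
-/

open RealInnerProductSpace Finset

theorem ConvexOn.add_inner_gradient_le {E : Type*} [NormedAddCommGroup E]
    [InnerProductSpace ℝ E] [CompleteSpace E] {φ : E → ℝ} (hφ : ConvexOn ℝ Set.univ φ) {z : E}
    (hd : DifferentiableAt ℝ φ z) (y : E) : φ z + ⟪gradient φ z, y - z⟫ ≤ φ y := by
  have hline : ConvexOn ℝ Set.univ (φ ∘ AffineMap.lineMap (k := ℝ) z y) := by
    simpa using hφ.comp_affineMap (AffineMap.lineMap (k := ℝ) z y)
  have hderiv : HasDerivAt (φ ∘ AffineMap.lineMap (k := ℝ) z y) ⟪gradient φ z, y - z⟫ 0 := by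
    have := hasGradientAt_iff_hasFDerivAt.mp hd.hasGradientAt
    rw [← AffineMap.lineMap_apply_zero (k := ℝ) z y] at this
    simpa using this.comp_hasDerivAt (0 : ℝ) AffineMap.hasDerivAt_lineMap
  have := hline.le_slope_of_hasDerivAt (Set.mem_univ 0) (Set.mem_univ 1) one_pos hderiv
  simp only [slope_def_field, Function.comp_apply, AffineMap.lineMap_apply_zero,
    AffineMap.lineMap_apply_one, sub_zero, div_one] at this
  linarith

theorem lagrangian_add_inner_gradient_le {E : Type*} [NormedAddCommGroup E]
    [InnerProductSpace ℝ E] [CompleteSpace E] {f g : E → ℝ} (hf : ConvexOn ℝ Set.univ f)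
    (hg : ConvexOn ℝ Set.univ g) {z : E} (hfz : DifferentiableAt ℝ f z)
    (hgz : DifferentiableAt ℝ g z) (w : E) (c l m : ℝ) (y : E) :
    f z + l ^ 2 * g z + m * (⟪w, z⟫ + c) + ⟪gradient f z + l ^ 2 • gradient g z + m • w, y - z⟫
      ≤ f y + l ^ 2 * g y + m * (⟪w, y⟫ + c) := by
  have hf' := hf.add_inner_gradient_le hfz y
  have hg' := mul_le_mul_of_nonneg_left (hg.add_inner_gradient_le hgz y) (sq_nonneg l)
  simp only [inner_add_left, real_inner_smul_left, inner_sub_right] at hf' hg' ⊢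
  linear_combination hf' + hg'

section GraphLaplacian

variable {ι E : Type*} [Fintype ι] [NormedAddCommGroup E] [InnerProductSpace ℝ E]

def graphLaplacian (a : ι → ι → ℝ) (u : ι → E) (i : ι) : E := ∑ j, a i j • (u i - u j)

theorem graphLaplacian_sub_const (a : ι → ι → ℝ) (u : ι → E) (c : E) :
    graphLaplacian a (fun i ↦ u i - c) = graphLaplacian a u := by
  ext1 i
  simp only [graphLaplacian, sub_sub_sub_cancel_right]

theorem neg_graphLaplacian_apply (a : ι → ι → ℝ) (u : ι → E) (i : ι) :
    -graphLaplacian a u i = ∑ j, a i j • (u j - u i) := by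
  simp only [graphLaplacian, ← sum_neg_distrib, ← smul_neg, neg_sub]

theorem sum_inner_graphLaplacian_comm {a : ι → ι → ℝ} (ha : ∀ i j, a i j = a j i)
    (u v : ι → E) :
    ∑ i, ⟪graphLaplacian a u i, v i⟫ = ∑ i, ⟪u i, graphLaplacian a v i⟫ := by
  have hswap : ∑ i, ∑ j, a i j * ⟪u j, v i⟫ = ∑ i, ∑ j, a i j * ⟪u i, v j⟫ := by
    rw [sum_comm]
    simp only [ha]
  simp only [graphLaplacian, sum_inner, inner_sum, real_inner_smul_left, real_inner_smul_right,
    inner_sub_left, inner_sub_right, mul_sub, sum_sub_distrib, hswap]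

theorem sum_inner_graphLaplacian_sub_eq_zero {a : ι → ι → ℝ} (ha : ∀ i j, a i j = a j i)
    (ξ : ι → E) {x : ι → E} (hx : graphLaplacian a x = 0) (z : E) :
    ∑ i, ⟪graphLaplacian a ξ i, x i - z⟫ = 0 := by
  rw [sum_inner_graphLaplacian_comm ha, graphLaplacian_sub_const, hx]
  simp

theorem sum_le_sum_of_le_add_inner_graphLaplacian {a : ι → ι → ℝ} (ha : ∀ i j, a i j = a j i)
    {φ : ι → E → ℝ} {ξ : ι → E} {z : E}
    (hφ : ∀ i y, φ i z + ⟪graphLaplacian a ξ i, y - z⟫ ≤ φ i y)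
    {x : ι → E} (hx : graphLaplacian a x = 0) :
    ∑ i, φ i z ≤ ∑ i, φ i (x i) :=
  calc ∑ i, φ i z = ∑ i, (φ i z + ⟪graphLaplacian a ξ i, x i - z⟫) := by
        rw [sum_add_distrib, sum_inner_graphLaplacian_sub_eq_zero ha ξ hx, add_zero]
    _ ≤ ∑ i, φ i (x i) := sum_le_sum fun i _ ↦ hφ i (x i)

end GraphLaplacian

theorem kkt_implies_saddle_point_general
    (N n : ℕ)
    (f g h : Fin N → EuclideanSpace ℝ (Fin n) → ℝ)
    (hvec : Fin N → EuclideanSpace ℝ (Fin n)) (hconst : Fin N → ℝ)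
    (h_affine : ∀ i x, h i x = ⟪hvec i, x⟫ + hconst i)
    (a : Fin N → Fin N → ℝ)
    (ha_symm : ∀ i j, a i j = a j i)
    (hf_conv : ∀ i, ConvexOn ℝ Set.univ (f i))
    (hf_diff : ∀ i, Differentiable ℝ (f i))
    (hg_conv : ∀ i, ConvexOn ℝ Set.univ (g i))
    (hg_diff : ∀ i, Differentiable ℝ (g i))
    -- the block Laplacian `𝐋 = L ⊗ Iₙ` acting on stacked vectors
    (Lap : (Fin N → EuclideanSpace ℝ (Fin n)) → Fin N → EuclideanSpace ℝ (Fin n))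
    (hLap : ∀ x i, Lap x i = ∑ j, a i j • (x i - x j))
    -- the generalized Lagrangian `L_g`
    (Lg : (Fin N → EuclideanSpace ℝ (Fin n)) → (Fin N → ℝ) → (Fin N → ℝ) → ℝ)
    (hLg : ∀ x lam mu, Lg x lam mu =
        (∑ i, (f i (x i) + (lam i) ^ 2 * g i (x i) + mu i * h i (x i)))
          + ∑ i, ⟪x i, Lap x i⟫)
    -- the KKT point (★)
    (xstar ξstar : Fin N → EuclideanSpace ℝ (Fin n)) (lstar mstar : Fin N → ℝ)
    (zstar : EuclideanSpace ℝ (Fin n))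
    (hkkt_Lx : ∀ i, Lap xstar i = 0)
    (hkkt_cons : ∀ i, xstar i = zstar)
    (hkkt_h : ∀ i, h i zstar = 0)
    (hkkt_g : ∀ i, g i zstar ≤ 0)
    (hkkt_slack : ∀ i, (lstar i) ^ 2 * g i zstar = 0)
    (hkkt_grad : ∀ i, gradient (f i) zstar + (lstar i) ^ 2 • gradient (g i) zstar
        + mstar i • hvec i + ∑ j, a i j • (ξstar j - ξstar i) = 0) :
    ∀ (lam mu : Fin N → ℝ) (x : Fin N → EuclideanSpace ℝ (Fin n)),
      (∀ i, Lap x i = 0) →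
        Lg xstar lam mu ≤ Lg xstar lstar mstar ∧ Lg xstar lstar mstar ≤ Lg x lstar mstar := by
  intro lam mu x hx
  have hLg_cons : ∀ y l m, (∀ i, Lap y i = 0) →
      Lg y l m = ∑ i, (f i (y i) + l i ^ 2 * g i (y i) + m i * h i (y i)) := by
    intro y l m hy
    simp [hLg, hy]
  have hLg_star : ∀ l m, Lg xstar l m = ∑ i, (f i zstar + l i ^ 2 * g i zstar) := by
    intro l m
    simp [hLg_cons _ _ _ hkkt_Lx, hkkt_cons, hkkt_h]
  refine ⟨?_, ?_⟩
  · rw [hLg_star, hLg_star]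
    refine sum_le_sum fun i _ ↦ ?_
    linarith [hkkt_slack i, mul_nonpos_of_nonneg_of_nonpos (sq_nonneg (lam i)) (hkkt_g i)]
  · have hLx : graphLaplacian a x = 0 := funext fun i ↦ (hLap x i).symm.trans (hx i)
    rw [hLg_cons _ _ _ hkkt_Lx, hLg_cons _ _ _ hx]
    simp only [hkkt_cons]
    refine sum_le_sum_of_le_add_inner_graphLaplacian ha_symm
      (φ := fun i y ↦ f i y + lstar i ^ 2 * g i y + mstar i * h i y) (ξ := ξstar)
      (fun i y ↦ ?_) hLx
    have hgrad : gradient (f i) zstar + lstar i ^ 2 • gradient (g i) zstar + mstar i • hvec i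
        = graphLaplacian a ξstar i := by
      have := hkkt_grad i
      rw [← neg_graphLaplacian_apply] at this
      exact add_neg_eq_zero.mp this
    simp only [h_affine, ← hgrad]
    exact lagrangian_add_inner_gradient_le (hf_conv i) (hg_conv i) (hf_diff i zstar)
      (hg_diff i zstar) (hvec i) (hconst i) (lstar i) (mstar i) y

/-- A point satisfying the generalized KKT condition (★) is a saddle point
of the generalized Lagrangian `L_g(x,λ,μ) = Σᵢ [fᵢ(xᵢ) + λᵢ² gᵢ(xᵢ) + μᵢ hᵢ(xᵢ)] + xᵀ𝐋x`
over multipliers `λ, μ` and consensus points `x` (i.e. `𝐋x = 0`). -/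
theorem kkt_implies_saddle_point
    (N n : ℕ)
    (f g h : Fin N → EuclideanSpace ℝ (Fin n) → ℝ)
    (hvec : Fin N → EuclideanSpace ℝ (Fin n)) (hconst : Fin N → ℝ)
    (h_affine : ∀ i x, h i x = ⟪hvec i, x⟫ + hconst i)
    (a : Fin N → Fin N → ℝ)
    (ha_symm : ∀ i j, a i j = a j i)
    (ha_nonneg : ∀ i j, 0 ≤ a i j)
    (ha_diag : ∀ i, a i i = 0)
    (hf_conv : ∀ i, ConvexOn ℝ Set.univ (f i))
    (hf_diff : ∀ i, Differentiable ℝ (f i))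
    (hg_conv : ∀ i, ConvexOn ℝ Set.univ (g i))
    (hg_diff : ∀ i, Differentiable ℝ (g i))
    -- the block Laplacian `𝐋 = L ⊗ Iₙ` acting on stacked vectors
    (Lap : (Fin N → EuclideanSpace ℝ (Fin n)) → Fin N → EuclideanSpace ℝ (Fin n))
    (hLap : ∀ x i, Lap x i = ∑ j, a i j • (x i - x j))
    -- the generalized Lagrangian `L_g`
    (Lg : (Fin N → EuclideanSpace ℝ (Fin n)) → (Fin N → ℝ) → (Fin N → ℝ) → ℝ)
    (hLg : ∀ x lam mu, Lg x lam mu =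
        (∑ i, (f i (x i) + (lam i) ^ 2 * g i (x i) + mu i * h i (x i)))
          + ∑ i, ⟪x i, Lap x i⟫)
    -- the KKT point (★)
    (xstar ξstar : Fin N → EuclideanSpace ℝ (Fin n)) (lstar mstar : Fin N → ℝ)
    (zstar : EuclideanSpace ℝ (Fin n))
    (hkkt_Lx : ∀ i, Lap xstar i = 0)
    (hkkt_cons : ∀ i, xstar i = zstar)
    (hkkt_h : ∀ i, h i zstar = 0)
    (hkkt_g : ∀ i, g i zstar ≤ 0)
    (hkkt_slack : ∀ i, (lstar i) ^ 2 * g i zstar = 0)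
    (hkkt_grad : ∀ i, gradient (f i) zstar + (lstar i) ^ 2 • gradient (g i) zstar
        + mstar i • hvec i + ∑ j, a i j • (ξstar j - ξstar i) = 0) :
    ∀ (lam mu : Fin N → ℝ) (x : Fin N → EuclideanSpace ℝ (Fin n)),
      (∀ i, Lap x i = 0) →
        Lg xstar lam mu ≤ Lg xstar lstar mstar ∧ Lg xstar lstar mstar ≤ Lg x lstar mstar :=
  kkt_implies_saddle_point_general N n f g h hvec hconst h_affine a ha_symm hf_conv hf_diff hg_conv
    hg_diff Lap hLap Lg hLg xstar ξstar lstar mstar zstar hkkt_Lx hkkt_cons hkkt_h hkkt_g hkkt_slack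
    hkkt_grad
end

section
/- Let m ≥ 2, constants 0 = b_1 < b_2 < … < b_m and c_k > 0 for k = 1,…,m, and z* ∈ ℝⁿ. Let ν : ℝ → ℝⁿ and let ρ_k : ℝ → ℝⁿ (k = 1,…,m) be differentiable with ρ_k'(t) = −b_k ρ_k(t) + c_k ν(t) for all t, and set x(t) = Σ_{k=1}^m ρ_k(t). Then the storage function S^c(t) := ‖ρ_1(t) − z*‖²/(2c_1) + Σ_{k=2}^m ‖ρ_k(t)‖²/(2c_k) is differentiable with derivative S^c{}'(t) = ⟨x(t) − z*, ν(t)⟩ − Σ_{k=2}^m (b_k/c_k) ‖ρ_k(t)‖² for all t. -/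
open RealInnerProductSpace

/-! Each mode contributes `⟪ρₖ - w, ν⟫ - (bₖ/cₖ)⟪ρₖ - w, ρₖ⟫` to the derivative of its storage
term, where `w = z*` for the integrator mode (`b₀ = 0`, so only the supply term survives) and
`w = 0` for the others (leaving the dissipation `(bₖ/cₖ)‖ρₖ‖²`). The supply terms add up to
`⟪x - z*, ν⟫` because `x = Σₖ ρₖ`. -/

section

variable {E : Type*} [NormedAddCommGroup E] [InnerProductSpace ℝ E]

theorem hasDerivAt_mode_storage {ρ ν : ℝ → E} {b c t : ℝ} (hc : c ≠ 0)
    (hρ : HasDerivAt ρ (-b • ρ t + c • ν t) t) (w : E) :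
    HasDerivAt (fun s => ‖ρ s - w‖ ^ 2 / (2 * c))
      (⟪ρ t - w, ν t⟫ - b / c * ⟪ρ t - w, ρ t⟫) t := by
  refine ((hρ.sub_const w).norm_sq.div_const (2 * c)).congr_deriv ?_
  rw [inner_add_right, inner_smul_right, inner_smul_right]
  field_simp
  ring

theorem inner_sum_sub_eq_add_sum_erase {ι : Type*} [Fintype ι] [DecidableEq ι]
    (v : ι → E) (i : ι) (z u : E) :
    ⟪(∑ k, v k) - z, u⟫ = ⟪v i - z, u⟫ + ∑ k ∈ Finset.univ.erase i, ⟪v k, u⟫ := by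
  rw [← Finset.add_sum_erase _ _ (Finset.mem_univ i), add_sub_right_comm, inner_add_left,
    sum_inner]

end

theorem compensator_dissipation_identity_general
    (n m : ℕ)
    (b c : Fin (m + 2) → ℝ)
    (hb0 : b 0 = 0) (hc : ∀ k, 0 < c k)
    (zstar : EuclideanSpace ℝ (Fin n))
    (ν : ℝ → EuclideanSpace ℝ (Fin n))
    (ρ : Fin (m + 2) → ℝ → EuclideanSpace ℝ (Fin n))
    (hρ : ∀ k t, HasDerivAt (ρ k) (-(b k) • ρ k t + c k • ν t) t)
    (x : ℝ → EuclideanSpace ℝ (Fin n))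
    (hx : ∀ t, x t = ∑ k, ρ k t)
    (Sc : ℝ → ℝ)
    (hSc : ∀ t, Sc t = ‖ρ 0 t - zstar‖ ^ 2 / (2 * c 0)
        + ∑ k ∈ Finset.univ.erase (0 : Fin (m + 2)), ‖ρ k t‖ ^ 2 / (2 * c k)) :
    ∀ t, HasDerivAt Sc
      (⟪x t - zstar, ν t⟫
        - ∑ k ∈ Finset.univ.erase (0 : Fin (m + 2)), (b k / c k) * ‖ρ k t‖ ^ 2) t := by
  intro t
  have hintegrator := hasDerivAt_mode_storage (hc 0).ne' (hρ 0 t) zstar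
  have hdissipative := HasDerivAt.fun_sum (u := Finset.univ.erase 0)
    fun k _ => hasDerivAt_mode_storage (hc k).ne' (hρ k t) 0
  simp only [sub_zero, real_inner_self_eq_norm_sq] at hdissipative
  rw [funext hSc]
  refine (hintegrator.add hdissipative).congr_deriv ?_
  rw [hb0, hx, inner_sum_sub_eq_add_sum_erase _ 0, Finset.sum_sub_distrib]
  ring

/-- Dissipation identity for the phase lead compensator: with
`ρₖ' = -bₖ ρₖ + cₖ ν` (here `k` ranges over `Fin (m+2)`, so there are `m + 2 ≥ 2` modes,
`b 0 = 0 < b 1 < …`), output `x = Σₖ ρₖ`, the storage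
`S^c = ‖ρ₀ - z*‖²/(2c₀) + Σ_{k≠0} ‖ρₖ‖²/(2cₖ)` satisfies
`(S^c)' = ⟨x - z*, ν⟩ - Σ_{k≠0} (bₖ/cₖ)‖ρₖ‖²`. -/
theorem compensator_dissipation_identity
    (n m : ℕ)
    (b c : Fin (m + 2) → ℝ)
    (hb0 : b 0 = 0) (hbmono : StrictMono b) (hc : ∀ k, 0 < c k)
    (zstar : EuclideanSpace ℝ (Fin n))
    (ν : ℝ → EuclideanSpace ℝ (Fin n))
    (ρ : Fin (m + 2) → ℝ → EuclideanSpace ℝ (Fin n))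
    (hρ : ∀ k t, HasDerivAt (ρ k) (-(b k) • ρ k t + c k • ν t) t)
    (x : ℝ → EuclideanSpace ℝ (Fin n))
    (hx : ∀ t, x t = ∑ k, ρ k t)
    (Sc : ℝ → ℝ)
    (hSc : ∀ t, Sc t = ‖ρ 0 t - zstar‖ ^ 2 / (2 * c 0)
        + ∑ k ∈ Finset.univ.erase (0 : Fin (m + 2)), ‖ρ k t‖ ^ 2 / (2 * c k)) :
    ∀ t, HasDerivAt Sc
      (⟪x t - zstar, ν t⟫
        - ∑ k ∈ Finset.univ.erase (0 : Fin (m + 2)), (b k / c k) * ‖ρ k t‖ ^ 2) t :=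
  compensator_dissipation_identity_general n m b c hb0 hc zstar ν ρ hρ x hx Sc hSc
end

section
/- Let m ≥ 2, constants 0 = b_1 < b_2 < … < b_m and c_k > 0 for k = 1,…,m, let f : ℝⁿ → ℝ be convex and differentiable, and fix z* ∈ ℝⁿ. Let ν : ℝ → ℝⁿ and differentiable ρ_k : ℝ → ℝⁿ satisfy ρ_k'(t) = −b_k ρ_k(t) + c_k ν(t), set x(t) = Σ_{k=1}^m ρ_k(t), and define φ(t) := ν(t) + ∇f(x(t)) and φ* := ∇f(z*). Then the storage function S^c(t) := ‖ρ_1(t) − z*‖²/(2c_1) + Σ_{k=2}^m ‖ρ_k(t)‖²/(2c_k) is nonnegative and satisfies S^c{}'(t) ≤ ⟨x(t) − z*, φ(t) − φ*⟩ for all t; i.e., the compensated primal dynamics is passive from φ − φ* to x − z*. -/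
open RealInnerProductSpace

/-!
Each mode `ρₖ` is a first-order lag driven by `ν`; measured from its centre (`z*` for the
integrator `k = 0`, where `b₀ = 0`, and `0` otherwise) it dissipates, so the weighted sum of squared
distances grows at most at rate `⟪x - z*, ν⟫`. Monotonicity of `∇f`, i.e. the first-order condition
for convexity applied at `x` and at `z*`, makes `⟪x - z*, ∇f x - ∇f z*⟫` nonnegative, which upgrades
`ν` to `φ - φ*`.
-/

section

variable {E : Type*} [NormedAddCommGroup E]

theorem ConvexOn.apply_sub_le_sub_of_hasFDerivAt [NormedSpace ℝ E] {s : Set E} {f : E → ℝ}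
    {f' : E →L[ℝ] ℝ} {u v : E} (hf : ConvexOn ℝ s f) (hu : u ∈ s) (hv : v ∈ s)
    (hf' : HasFDerivAt f f' u) :
    f' (v - u) ≤ f v - f u := by
  set L : ℝ →ᵃ[ℝ] E := AffineMap.lineMap u v
  have hL : HasDerivAt L (v - u) 0 := by
    simpa [L, AffineMap.coe_lineMap] using
      ((hasDerivAt_id (0 : ℝ)).smul_const (v - u)).add_const u
  have hd : HasDerivAt (f ∘ L) (f' (v - u)) 0 := by
    simpa [L] using hf'.comp_hasDerivAt_of_eq 0 hL (by simp [L])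
  have hslope := (hf.comp_affineMap L).le_slope_of_hasDerivAt (x := 0) (y := 1)
    (by simpa [L]) (by simpa [L]) one_pos hd
  simpa [slope, L] using hslope

theorem ConvexOn.inner_sub_gradient_sub_nonneg [InnerProductSpace ℝ E] [CompleteSpace E]
    {s : Set E} {f : E → ℝ} {u v : E} (hf : ConvexOn ℝ s f) (hu : u ∈ s) (hv : v ∈ s)
    (hfu : DifferentiableAt ℝ f u) (hfv : DifferentiableAt ℝ f v) :
    0 ≤ ⟪v - u, gradient f v - gradient f u⟫ := by
  have h₁ := hf.apply_sub_le_sub_of_hasFDerivAt hu hv hfu.hasGradientAt.hasFDerivAt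
  have h₂ := hf.apply_sub_le_sub_of_hasFDerivAt hv hu hfv.hasGradientAt.hasFDerivAt
  simp only [InnerProductSpace.toDual_apply_apply] at h₁ h₂
  rw [← neg_sub v u, inner_neg_right] at h₂
  rw [inner_sub_right, ← real_inner_comm (v - u), ← real_inner_comm (v - u)]
  linarith

theorem inner_sub_neg_smul_add_smul_div_le [InnerProductSpace ℝ E] {r w v : E} {b c : ℝ}
    (hb : 0 ≤ b) (hc : 0 < c) (hbw : b • w = 0) :
    ⟪r - w, -b • r + c • v⟫ / c ≤ ⟪r - w, v⟫ := by
  have hlag : -b • r + c • v = -b • (r - w) + c • v := by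
    rw [smul_sub, neg_smul b w, hbw, neg_zero, sub_zero]
  rw [hlag, inner_add_right, real_inner_smul_right, real_inner_smul_right,
    real_inner_self_eq_norm_sq, div_le_iff₀ hc]
  nlinarith [sq_nonneg ‖r - w‖]

theorem exists_hasDerivAt_sum_norm_sub_sq_div_le [InnerProductSpace ℝ E] {ι : Type*} [Fintype ι]
    {b c : ι → ℝ} (hb : ∀ k, 0 ≤ b k) (hc : ∀ k, 0 < c k) {w : ι → E}
    (hbw : ∀ k, b k • w k = 0) {ν : ℝ → E} {ρ : ι → ℝ → E}
    (hρ : ∀ k t, HasDerivAt (ρ k) (-(b k) • ρ k t + c k • ν t) t) (t : ℝ) :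
    ∃ d, HasDerivAt (fun t => ∑ k, ‖ρ k t - w k‖ ^ 2 / (2 * c k)) d t ∧
      d ≤ ⟪∑ k, (ρ k t - w k), ν t⟫ := by
  refine ⟨∑ k, ⟪ρ k t - w k, -(b k) • ρ k t + c k • ν t⟫ / c k, ?_, ?_⟩
  · exact HasDerivAt.fun_sum fun k _ =>
      (((hρ k t).sub_const (w k)).norm_sq.div_const (2 * c k)).congr_deriv
        (mul_div_mul_left _ _ two_ne_zero)
  · rw [sum_inner]
    exact Finset.sum_le_sum fun k _ => inner_sub_neg_smul_add_smul_div_le (hb k) (hc k) (hbw k)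

end

/-- Passivity of the compensated primal dynamics: with
`ρₖ' = -bₖ ρₖ + cₖ ν` (indices in `Fin (m+2)`, so `m + 2 ≥ 2` modes, `b 0 = 0 < b 1 < …`),
`x = Σₖ ρₖ`, `φ = ν + ∇f(x)`, `φ* = ∇f(z*)`, the storage
`S^c = ‖ρ₀ - z*‖²/(2c₀) + Σ_{k≠0} ‖ρₖ‖²/(2cₖ)` is nonnegative and satisfies
`(S^c)'(t) ≤ ⟨x(t) - z*, φ(t) - φ*⟩`. -/
theorem compensated_primal_dynamics_passive
    (n m : ℕ)
    (b c : Fin (m + 2) → ℝ)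
    (hb0 : b 0 = 0) (hbmono : StrictMono b) (hc : ∀ k, 0 < c k)
    (f : EuclideanSpace ℝ (Fin n) → ℝ)
    (hf_conv : ConvexOn ℝ Set.univ f)
    (hf_diff : Differentiable ℝ f)
    (zstar : EuclideanSpace ℝ (Fin n))
    (ν : ℝ → EuclideanSpace ℝ (Fin n))
    (ρ : Fin (m + 2) → ℝ → EuclideanSpace ℝ (Fin n))
    (hρ : ∀ k t, HasDerivAt (ρ k) (-(b k) • ρ k t + c k • ν t) t)
    (x : ℝ → EuclideanSpace ℝ (Fin n))
    (hx : ∀ t, x t = ∑ k, ρ k t)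
    (φ : ℝ → EuclideanSpace ℝ (Fin n))
    (hφ : ∀ t, φ t = ν t + gradient f (x t))
    (φstar : EuclideanSpace ℝ (Fin n))
    (hφstar : φstar = gradient f zstar)
    (Sc : ℝ → ℝ)
    (hSc : ∀ t, Sc t = ‖ρ 0 t - zstar‖ ^ 2 / (2 * c 0)
        + ∑ k ∈ Finset.univ.erase (0 : Fin (m + 2)), ‖ρ k t‖ ^ 2 / (2 * c k)) :
    (∀ t, 0 ≤ Sc t) ∧
      ∀ t, ∃ d : ℝ, HasDerivAt Sc d t ∧ d ≤ ⟪x t - zstar, φ t - φstar⟫ := by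
  set w : Fin (m + 2) → EuclideanSpace ℝ (Fin n) := Pi.single 0 zstar
  have hSc_eq : Sc = fun t => ∑ k, ‖ρ k t - w k‖ ^ 2 / (2 * c k) := by
    funext t
    rw [hSc t, ← Finset.add_sum_erase _ _ (Finset.mem_univ 0)]
    refine congrArg₂ _ (by simp [w]) (Finset.sum_congr rfl fun k hk => ?_)
    simp [w, Pi.single_eq_of_ne (Finset.ne_of_mem_erase hk)]
  have hb : ∀ k, 0 ≤ b k := fun k => hb0 ▸ hbmono.monotone (Fin.zero_le k)
  have hbw : ∀ k, b k • w k = 0 := fun k => by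
    rcases eq_or_ne k 0 with rfl | hk
    · simp [hb0]
    · simp [w, Pi.single_eq_of_ne hk]
  refine ⟨fun t => hSc_eq ▸ Finset.sum_nonneg fun k _ => div_nonneg (sq_nonneg _)
    (mul_nonneg zero_le_two (hc k).le), fun t => ?_⟩
  obtain ⟨d, hd, hd_le⟩ := exists_hasDerivAt_sum_norm_sub_sq_div_le hb hc hbw hρ t
  have hsum : ∑ k, (ρ k t - w k) = x t - zstar := by
    simp [Finset.sum_sub_distrib, hx t, w]
  have hgrad := hf_conv.inner_sub_gradient_sub_nonneg (Set.mem_univ zstar) (Set.mem_univ (x t))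
    (hf_diff zstar) (hf_diff (x t))
  refine ⟨d, hSc_eq ▸ hd, ?_⟩
  calc d ≤ ⟪x t - zstar, ν t⟫ := hsum ▸ hd_le
    _ ≤ ⟪x t - zstar, ν t⟫ + ⟪x t - zstar, gradient f (x t) - gradient f zstar⟫ :=
      le_add_of_nonneg_right hgrad
    _ = ⟪x t - zstar, φ t - φstar⟫ := by
      rw [← inner_add_right, hφ t, hφstar, add_sub_assoc]
end

section
/- Let g : ℝⁿ → ℝ be convex and differentiable, h : ℝⁿ → ℝ affine, and let z* ∈ ℝⁿ and λ* ∈ ℝ satisfy g(z*) ≤ 0, (λ*)² g(z*) = 0, and h(z*) = 0. Then for every x ∈ ℝⁿ and every λ, μ, μ* ∈ ℝ: (λ² − (λ*)²) g(x) + (μ − μ*) h(x) ≤ ⟨ λ² ∇g(x) + μ ∇h(x) − (λ*)² ∇g(z*) − μ* ∇h(z*), x − z* ⟩. -/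
/-!
The gradient inequality of a convex function, applied at `x` towards `z*` and at `z*` towards
`x`, gives `g x - g z* ≤ ⟪∇g x, x - z*⟫` and `⟪∇g z*, x - z*⟫ ≤ g x - g z*`. Weighting these by
`λ²` and `λ*²`, the remaining `λ² g z*` has the right sign because `g z* ≤ 0`, and `λ*² g z*`
vanishes by complementary slackness. The affine terms match exactly, since `h z* = 0` makes
`h x = ⟪∇h, x - z*⟫`.
-/

open RealInnerProductSpace

theorem ConvexOn.apply_sub_le_of_hasFDerivAt {E : Type*} [NormedAddCommGroup E] [NormedSpace ℝ E]
    {s : Set E} {f : E → ℝ} {f' : E →L[ℝ] ℝ} {x y : E} (hf : ConvexOn ℝ s f)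
    (hx : x ∈ s) (hy : y ∈ s) (hf' : HasFDerivAt f f' x) :
    f' (y - x) ≤ f y - f x := by
  have hline : ConvexOn ℝ (Set.Icc 0 1) (f ∘ (AffineMap.lineMap x y : ℝ →ᵃ[ℝ] E)) := by
    refine (hf.comp_affineMap _).subset ?_ (convex_Icc (0 : ℝ) 1)
    rw [← Set.image_subset_iff, ← segment_eq_image_lineMap]
    exact hf.1.segment_subset hx hy
  have hderiv : HasDerivAt (f ∘ (AffineMap.lineMap x y : ℝ →ᵃ[ℝ] E)) (f' (y - x)) 0 := by
    apply HasFDerivAt.comp_hasDerivAt _ _ AffineMap.hasDerivAt_lineMap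
    simpa using hf'
  simpa [slope] using hline.le_slope_of_hasDerivAt (by simp) (by simp) one_pos hderiv

theorem ConvexOn.inner_gradient_le_sub {F : Type*} [NormedAddCommGroup F] [InnerProductSpace ℝ F]
    [CompleteSpace F] {s : Set F} {f : F → ℝ} {x y : F} (hf : ConvexOn ℝ s f)
    (hx : x ∈ s) (hy : y ∈ s) (hd : DifferentiableAt ℝ f x) :
    ⟪gradient f x, y - x⟫ ≤ f y - f x := by
  simpa using hf.apply_sub_le_of_hasFDerivAt hx hy hd.hasGradientAt.hasFDerivAt

/-- Core inequality behind the passivity of the dual dynamics: for `g`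
convex differentiable, `h` affine (with constant gradient `hvec`), and `(z*, λ*)` satisfying
`g(z*) ≤ 0`, `(λ*)² g(z*) = 0`, `h(z*) = 0`, one has for all `x, λ, μ, μ*`:
`(λ² - (λ*)²) g(x) + (μ - μ*) h(x) ≤ ⟨λ²∇g(x) + μ∇h(x) - (λ*)²∇g(z*) - μ*∇h(z*), x - z*⟩`. -/
theorem dual_dynamics_core_inequality
    (n : ℕ)
    (g h : EuclideanSpace ℝ (Fin n) → ℝ)
    (hvec : EuclideanSpace ℝ (Fin n)) (hconst : ℝ)
    (h_affine : ∀ x, h x = ⟪hvec, x⟫ + hconst)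
    (hg_conv : ConvexOn ℝ Set.univ g)
    (hg_diff : Differentiable ℝ g)
    (zstar : EuclideanSpace ℝ (Fin n)) (lstar : ℝ)
    (hgz : g zstar ≤ 0)
    (hslack : lstar ^ 2 * g zstar = 0)
    (hhz : h zstar = 0) :
    ∀ (x : EuclideanSpace ℝ (Fin n)) (lam mu mustar : ℝ),
      (lam ^ 2 - lstar ^ 2) * g x + (mu - mustar) * h x
        ≤ ⟪lam ^ 2 • gradient g x + mu • hvec
            - lstar ^ 2 • gradient g zstar - mustar • hvec, x - zstar⟫ := by
  intro x lam mu mustar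
  have hgrad_x : ⟪gradient g x, zstar - x⟫ ≤ g zstar - g x :=
    hg_conv.inner_gradient_le_sub trivial trivial (hg_diff x)
  have hgrad_z : ⟪gradient g zstar, x - zstar⟫ ≤ g x - g zstar :=
    hg_conv.inner_gradient_le_sub trivial trivial (hg_diff zstar)
  have h_eq : ⟪hvec, x - zstar⟫ = h x := by
    rw [inner_sub_right, h_affine]
    linarith [h_affine zstar]
  rw [← neg_sub, inner_neg_right] at hgrad_x
  simp only [inner_sub_left, inner_add_left, real_inner_smul_left, h_eq]
  linarith [mul_le_mul_of_nonneg_left hgrad_x (sq_nonneg lam),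
    mul_le_mul_of_nonneg_left hgrad_z (sq_nonneg lstar),
    mul_nonpos_of_nonneg_of_nonpos (sq_nonneg lam) hgz]
end

section
/- Let g : ℝⁿ → ℝ be convex and differentiable, h : ℝⁿ → ℝ affine, and let z* ∈ ℝⁿ, λ* ≥ 0, μ* ∈ ℝ satisfy g(z*) ≤ 0, (λ*)² g(z*) = 0, h(z*) = 0. Let x : ℝ → ℝⁿ be continuous and let λ, μ : ℝ → ℝ be differentiable with λ'(t) = 2 λ(t) g(x(t)), μ'(t) = h(x(t)), and λ(t) > 0 for all t. Define the storage function S^g(t) := (λ(t)² − (λ*)²)/4 − ((λ*)²/2)(ln λ(t) − ln λ*) + (μ(t) − μ*)²/2 (the logarithmic term being 0 when λ* = 0). Then S^g(t) ≥ 0, S^g(t) = 0 exactly when (λ(t), μ(t)) = (λ*, μ*), and S^g is differentiable with S^g{}'(t) ≤ ⟨ ζ(t) − ζ*, x(t) − z* ⟩ for all t, where ζ(t) := λ(t)² ∇g(x(t)) + μ(t) ∇h(x(t)) and ζ* := (λ*)² ∇g(z*) + μ* ∇h(z*); i.e., the dual gradient dynamics is passive from x − z* to ζ − ζ*. -/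
open RealInnerProductSpace

/-!
Both halves of `S^g` are controlled separately. Since `log (l / a) ≤ l / a - 1`, the logarithmic
part of `S^g` dominates `(λ - λ*)² / 4`, which gives nonnegativity and the characterisation of the
zeros. Along the dynamics `(log λ)' = 2 g(x)`, so `S^g` has derivative
`(λ² - (λ*)²) g(x) + (μ - μ*) h(x)`. The first-order characterisation of convexity, applied at `x`
and at `z*` and weighted by `λ²` and `(λ*)²`, bounds the first term by
`⟪λ² ∇g(x) - (λ*)² ∇g(z*), x - z*⟫` thanks to `g(z*) ≤ 0` and complementary slackness; the second
term equals `(μ - μ*) ⟪∇h, x - z*⟫` because `h` is affine with `h(z*) = 0`.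
-/

theorem ConvexOn.add_fderiv_sub_le {E : Type*} [NormedAddCommGroup E] [NormedSpace ℝ E]
    {s : Set E} {f : E → ℝ} (hf : ConvexOn ℝ s f) {p q : E} (hp : p ∈ s) (hq : q ∈ s)
    (hfp : DifferentiableAt ℝ f p) :
    f p + fderiv ℝ f p (q - p) ≤ f q := by
  set ℓ : ℝ →ᵃ[ℝ] E := AffineMap.lineMap p q
  have hℓ0 : ℓ 0 = p := AffineMap.lineMap_apply_zero p q
  have hℓ1 : ℓ 1 = q := AffineMap.lineMap_apply_one p q
  have hderiv : HasDerivAt (f ∘ ℓ) (fderiv ℝ f p (q - p)) 0 := by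
    have hfℓ : HasFDerivAt f (fderiv ℝ f p) (ℓ 0) := hℓ0 ▸ hfp.hasFDerivAt
    exact hfℓ.comp_hasDerivAt 0 AffineMap.hasDerivAt_lineMap
  have hslope := (hf.comp_affineMap ℓ).le_slope_of_hasDerivAt (x := 0) (y := 1)
    (by simpa [hℓ0] using hp) (by simpa [hℓ1] using hq) one_pos hderiv
  rw [slope_def_field, Function.comp_apply, Function.comp_apply, hℓ0, hℓ1, sub_zero,
    div_one] at hslope
  linarith

theorem ConvexOn.add_inner_gradient_sub_le {F : Type*} [NormedAddCommGroup F]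
    [InnerProductSpace ℝ F] [CompleteSpace F] {s : Set F} {f : F → ℝ} (hf : ConvexOn ℝ s f)
    {p q : F} (hp : p ∈ s) (hq : q ∈ s) (hfp : DifferentiableAt ℝ f p) :
    f p + ⟪gradient f p, q - p⟫ ≤ f q := by
  simpa only [inner_gradient_left] using hf.add_fderiv_sub_le hp hq hfp

theorem ConvexOn.sub_mul_le_inner_smul_gradient_sub {F : Type*} [NormedAddCommGroup F]
    [InnerProductSpace ℝ F] [CompleteSpace F] {s : Set F} {f : F → ℝ} (hf : ConvexOn ℝ s f)
    {x z : F} (hx : x ∈ s) (hz : z ∈ s) (hfx : DifferentiableAt ℝ f x)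
    (hfz : DifferentiableAt ℝ f z) {a b : ℝ} (ha : 0 ≤ a) (hb : 0 ≤ b) (hfz_nonpos : f z ≤ 0)
    (hslack : b * f z = 0) :
    (a - b) * f x ≤ ⟪a • gradient f x - b • gradient f z, x - z⟫ := by
  have hxz := hf.add_inner_gradient_sub_le hx hz hfx
  have hzx := hf.add_inner_gradient_sub_le hz hx hfz
  rw [← neg_sub, inner_neg_right] at hxz
  rw [inner_sub_left, real_inner_smul_left, real_inner_smul_left]
  nlinarith [mul_le_mul_of_nonneg_left hxz ha, mul_le_mul_of_nonneg_left hzx hb,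
    mul_nonpos_of_nonneg_of_nonpos ha hfz_nonpos]

/-- The `λ`-part of the storage function `S^g`, with `a = λ*`. Since `Real.log 0 = 0`, it is
`l² / 4` when `a = 0`. -/
noncomputable def logStorage (a l : ℝ) : ℝ :=
  (l ^ 2 - a ^ 2) / 4 - a ^ 2 / 2 * (Real.log l - Real.log a)

theorem sq_sub_div_four_le_logStorage {a l : ℝ} (ha : 0 ≤ a) (hl : 0 < l) :
    (l - a) ^ 2 / 4 ≤ logStorage a l := by
  rcases ha.eq_or_lt with rfl | ha
  · simp [logStorage]
  have hlog : Real.log l - Real.log a ≤ l / a - 1 := by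
    rw [← Real.log_div hl.ne' ha.ne']
    exact Real.log_le_sub_one_of_pos (div_pos hl ha)
  calc (l - a) ^ 2 / 4 = (l ^ 2 - a ^ 2) / 4 - a ^ 2 / 2 * (l / a - 1) := by
        field_simp
        ring
    _ ≤ logStorage a l := by
        unfold logStorage
        gcongr

theorem HasDerivAt.logStorage {lam : ℝ → ℝ} {G t : ℝ} (a : ℝ)
    (hlam : HasDerivAt lam (2 * lam t * G) t) (hlam_ne : lam t ≠ 0) :
    HasDerivAt (fun s => logStorage a (lam s)) ((lam t ^ 2 - a ^ 2) * G) t := by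
  refine ((((hlam.fun_pow 2).sub_const (a ^ 2)).div_const 4).fun_sub
    (((hlam.log hlam_ne).sub_const (Real.log a)).const_mul (a ^ 2 / 2))).congr_deriv ?_
  field_simp
  ring

theorem dual_gradient_dynamics_passive_general
    (n : ℕ)
    (g h : EuclideanSpace ℝ (Fin n) → ℝ)
    (hvec : EuclideanSpace ℝ (Fin n)) (hconst : ℝ)
    (h_affine : ∀ x, h x = ⟪hvec, x⟫ + hconst)
    (hg_conv : ConvexOn ℝ Set.univ g)
    (hg_diff : Differentiable ℝ g)
    (zstar : EuclideanSpace ℝ (Fin n)) (lstar mustar : ℝ)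
    (hlstar : 0 ≤ lstar)
    (hgz : g zstar ≤ 0)
    (hslack : lstar ^ 2 * g zstar = 0)
    (hhz : h zstar = 0)
    (x : ℝ → EuclideanSpace ℝ (Fin n))
    (lam mu : ℝ → ℝ)
    (hlam : ∀ t, HasDerivAt lam (2 * lam t * g (x t)) t)
    (hmu : ∀ t, HasDerivAt mu (h (x t)) t)
    (hlam_pos : ∀ t, 0 < lam t)
    (Sg : ℝ → ℝ)
    (hSg : ∀ t, Sg t = ((lam t) ^ 2 - lstar ^ 2) / 4
        - (lstar ^ 2 / 2) * (Real.log (lam t) - Real.log lstar)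
        + (mu t - mustar) ^ 2 / 2)
    (ζ : ℝ → EuclideanSpace ℝ (Fin n))
    (hζ : ∀ t, ζ t = (lam t) ^ 2 • gradient g (x t) + mu t • hvec)
    (ζstar : EuclideanSpace ℝ (Fin n))
    (hζstar : ζstar = lstar ^ 2 • gradient g zstar + mustar • hvec) :
    (∀ t, 0 ≤ Sg t) ∧
      (∀ t, Sg t = 0 ↔ (lam t = lstar ∧ mu t = mustar)) ∧
      ∀ t, ∃ d : ℝ, HasDerivAt Sg d t ∧ d ≤ ⟪ζ t - ζstar, x t - zstar⟫ := by
  have hSg_eq : Sg = fun s => logStorage lstar (lam s) + (mu s - mustar) ^ 2 / 2 := funext hSg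
  have hlower t : (lam t - lstar) ^ 2 / 4 + (mu t - mustar) ^ 2 / 2 ≤ Sg t := by
    rw [hSg_eq]
    dsimp only
    gcongr
    exact sq_sub_div_four_le_logStorage hlstar (hlam_pos t)
  have hh_inner p : h p = ⟪hvec, p - zstar⟫ := by
    have hz := h_affine zstar
    rw [inner_sub_right, h_affine]
    linarith
  refine ⟨fun t => le_trans (by positivity) (hlower t), fun t => ⟨fun h0 => ?_, ?_⟩, fun t => ?_⟩
  · have hlower_zero := h0 ▸ hlower t
    constructor <;> nlinarith [sq_nonneg (lam t - lstar), sq_nonneg (mu t - mustar)]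
  · rintro ⟨hl, hm⟩
    simp [hSg_eq, logStorage, hl, hm]
  refine ⟨(lam t ^ 2 - lstar ^ 2) * g (x t) + (mu t - mustar) * h (x t), ?_, ?_⟩
  · rw [hSg_eq]
    refine (((hlam t).logStorage lstar (hlam_pos t).ne').fun_add
      ((((hmu t).sub_const mustar).fun_pow 2).div_const 2)).congr_deriv ?_
    ring
  · have hsplit : ζ t - ζstar = (lam t ^ 2 • gradient g (x t) - lstar ^ 2 • gradient g zstar)
        + (mu t - mustar) • hvec := by
      rw [hζ t, hζstar]
      module
    rw [hsplit, inner_add_left, real_inner_smul_left, hh_inner]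
    gcongr
    exact hg_conv.sub_mul_le_inner_smul_gradient_sub trivial trivial (hg_diff _) (hg_diff _)
      (sq_nonneg _) (sq_nonneg _) hgz hslack

/-- Passivity of the dual gradient dynamics `λ' = 2λ g(x)`, `μ' = h(x)`
with the logarithmic storage
`S^g = (λ² - (λ*)²)/4 - ((λ*)²/2)(ln λ - ln λ*) + (μ - μ*)²/2`:
`S^g ≥ 0`, `S^g = 0` exactly at `(λ*, μ*)`, and `(S^g)'(t) ≤ ⟨ζ(t) - ζ*, x(t) - z*⟩` where
`ζ = λ²∇g(x) + μ∇h(x)`, `ζ* = (λ*)²∇g(z*) + μ*∇h(z*)`. (Since `Real.log 0 = 0` and the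
logarithmic term carries the factor `(λ*)²`, it is automatically absent when `λ* = 0`.) -/
theorem dual_gradient_dynamics_passive
    (n : ℕ)
    (g h : EuclideanSpace ℝ (Fin n) → ℝ)
    (hvec : EuclideanSpace ℝ (Fin n)) (hconst : ℝ)
    (h_affine : ∀ x, h x = ⟪hvec, x⟫ + hconst)
    (hg_conv : ConvexOn ℝ Set.univ g)
    (hg_diff : Differentiable ℝ g)
    (zstar : EuclideanSpace ℝ (Fin n)) (lstar mustar : ℝ)
    (hlstar : 0 ≤ lstar)
    (hgz : g zstar ≤ 0)
    (hslack : lstar ^ 2 * g zstar = 0)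
    (hhz : h zstar = 0)
    (x : ℝ → EuclideanSpace ℝ (Fin n)) (hx_cont : Continuous x)
    (lam mu : ℝ → ℝ)
    (hlam : ∀ t, HasDerivAt lam (2 * lam t * g (x t)) t)
    (hmu : ∀ t, HasDerivAt mu (h (x t)) t)
    (hlam_pos : ∀ t, 0 < lam t)
    (Sg : ℝ → ℝ)
    (hSg : ∀ t, Sg t = ((lam t) ^ 2 - lstar ^ 2) / 4
        - (lstar ^ 2 / 2) * (Real.log (lam t) - Real.log lstar)
        + (mu t - mustar) ^ 2 / 2)
    (ζ : ℝ → EuclideanSpace ℝ (Fin n))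
    (hζ : ∀ t, ζ t = (lam t) ^ 2 • gradient g (x t) + mu t • hvec)
    (ζstar : EuclideanSpace ℝ (Fin n))
    (hζstar : ζstar = lstar ^ 2 • gradient g zstar + mustar • hvec) :
    (∀ t, 0 ≤ Sg t) ∧
      (∀ t, Sg t = 0 ↔ (lam t = lstar ∧ mu t = mustar)) ∧
      ∀ t, ∃ d : ℝ, HasDerivAt Sg d t ∧ d ≤ ⟪ζ t - ζstar, x t - zstar⟫ :=
  dual_gradient_dynamics_passive_general n g h hvec hconst h_affine hg_conv hg_diff zstar lstar
    mustar hlstar hgz hslack hhz x lam mu hlam hmu hlam_pos Sg hSg ζ hζ ζstar hζstar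
end

section
/- Consider N agents with convex, twice continuously differentiable f_i, g_i : ℝⁿ → ℝ, affine h_i : ℝⁿ → ℝ, symmetric weights a_{ij} = a_{ji} ≥ 0 (a_{ii} = 0), Laplacian L = diag(A·1_N) − A, 𝐋 = L ⊗ I_n, and suppose (x*, ξ*, λ*, μ*) satisfies the KKT condition (★): 𝐋x* = 0 (so x*_i = z* for all i); h_i(z*) = 0, g_i(z*) ≤ 0, (λ*_i)² g_i(z*) = 0; and ∇f_i(z*) + (λ*_i)² ∇g_i(z*) + μ*_i ∇h_i(z*) + Σ_j a_{ij}(ξ*_j − ξ*_i) = 0 for all i. Let (ρ^i_k, ξ_i, λ_i, μ_i), i = 1,…,N, k = 1,…,m (m ≥ 2), be differentiable functions of t solving the compensated primal–dual flow: (ρ^i_k)' = −b^i_k ρ^i_k + c^i_k ν_i with 0 = b^i_1 < b^i_2 < … < b^i_m and c^i_k > 0; x_i = Σ_k ρ^i_k; ν_i = −∇f_i(x_i) − λ_i² ∇g_i(x_i) − μ_i ∇h_i(x_i) + Σ_j a_{ij}(x_j − x_i) − Σ_j a_{ij}(ξ_j − ξ_i); ξ_i' = Σ_j a_{ij}(x_j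 − x_i); λ_i' = 2λ_i g_i(x_i); μ_i' = h_i(x_i); and λ_i(t) > 0 for all t, i. Then the Lyapunov function V(t) := Σ_i [ (λ_i² − (λ*_i)²)/4 − ((λ*_i)²/2)(ln λ_i − ln λ*_i) + (μ_i − μ*_i)²/2 ] + Σ_i [ ‖ρ^i_1 − z*‖²/(2c^i_1) + Σ_{k=2}^m ‖ρ^i_k‖²/(2c^i_k) ] + ½‖ξ − ξ*‖² (log terms absent where λ*_i = 0) satisfies V'(t) ≤ −(x(t) − x*)ᵀ 𝐋 (x(t) − x*) − Σ_i Σ_{k=2}^m (b^i_k/c^i_k)‖ρ^i_k(t)‖² ≤ 0 for all t. -/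
/-!
The Lyapunov function is a sum of storage functions. The logarithmic term makes the derivative
of the storage of `λᵢ` equal to `(λᵢ² - λ*ᵢ²) gᵢ(xᵢ)`; since the compensator states add up to
`xᵢ`, the compensator storage contributes `⟪xᵢ - z*, νᵢ⟫` minus the dissipation
`Σₖ (bᵢₖ/cᵢₖ)‖ρᵢₖ‖²`. Subtracting the KKT condition from `νᵢ`, monotonicity of `∇fᵢ`, the
first-order convexity inequalities for `gᵢ` and complementary slackness bound everything local to
agent `i` by its coupling terms. By symmetry of the weights the `ξ`-couplings cancel, leaving
`-(x - x*)ᵀ𝐋(x - x*) = -½ Σᵢⱼ aᵢⱼ‖uᵢ - uⱼ‖² ≤ 0` with `u = x - x*`.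
-/

open RealInnerProductSpace Finset

section Convex

variable {E : Type*} [NormedAddCommGroup E] [NormedSpace ℝ E] {s : Set E} {f : E → ℝ}
  {f' : StrongDual ℝ E} {x y : E}

theorem ConvexOn.apply_add_fderiv_sub_le (hf : ConvexOn ℝ s f) (hx : x ∈ s) (hy : y ∈ s)
    (hf' : HasFDerivAt f f' x) : f x + f' (y - x) ≤ f y := by
  let φ := f ∘ AffineMap.lineMap (k := ℝ) x y
  have hφ : ConvexOn ℝ (Set.Icc 0 1) φ :=
    (hf.comp_affineMap _).subset (fun t ht => hf.1.lineMap_mem hx hy ht) (convex_Icc 0 1)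
  have hφ' : HasDerivAt φ (f' (y - x)) 0 := by
    have := (AffineMap.lineMap_apply_zero (k := ℝ) x y).symm ▸ hf'
    exact this.comp_hasDerivAt 0 AffineMap.hasDerivAt_lineMap
  have := hφ.le_slope_of_hasDerivAt (by simp) (by simp) zero_lt_one hφ'
  simp only [φ, slope_def_field, Function.comp_apply, AffineMap.lineMap_apply_zero,
    AffineMap.lineMap_apply_one, sub_zero, div_one] at this
  linarith

end Convex

section Gradient

variable {E : Type*} [NormedAddCommGroup E] [InnerProductSpace ℝ E] [CompleteSpace E]
  {s : Set E} {f : E → ℝ} {x y : E}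

theorem ConvexOn.apply_add_inner_gradient_sub_le (hf : ConvexOn ℝ s f) (hx : x ∈ s)
    (hy : y ∈ s) (hfx : DifferentiableAt ℝ f x) : f x + ⟪gradient f x, y - x⟫ ≤ f y :=
  hf.apply_add_fderiv_sub_le hx hy (hasGradientAt_iff_hasFDerivAt.mp hfx.hasGradientAt)

theorem ConvexOn.inner_gradient_sub_gradient_nonneg (hf : ConvexOn ℝ s f) (hx : x ∈ s)
    (hy : y ∈ s) (hfx : DifferentiableAt ℝ f x) (hfy : DifferentiableAt ℝ f y) :
    0 ≤ ⟪gradient f x - gradient f y, x - y⟫ := by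
  have hxy := hf.apply_add_inner_gradient_sub_le hx hy hfx
  have hyx := hf.apply_add_inner_gradient_sub_le hy hx hfy
  rw [← neg_sub x y, inner_neg_right] at hxy
  rw [inner_sub_left]
  linarith

theorem primal_dual_dissipation_le {f g h : E → ℝ} {z w v s₀ ν : E} {h₀ p p₀ μ μ₀ : ℝ}
    (hf : ConvexOn ℝ s f) (hg : ConvexOn ℝ s g) (hx : x ∈ s) (hz : z ∈ s)
    (hfx : DifferentiableAt ℝ f x) (hfz : DifferentiableAt ℝ f z)
    (hgx : DifferentiableAt ℝ g x) (hgz : DifferentiableAt ℝ g z)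
    (hh : ∀ y, h y = ⟪w, y⟫ + h₀) (hhz : h z = 0) (hgz_nonpos : g z ≤ 0)
    (hp : 0 ≤ p) (hp₀ : 0 ≤ p₀) (hslack : p₀ * g z = 0)
    (hkkt : gradient f z + p₀ • gradient g z + μ₀ • w + s₀ = 0)
    (hν : ν = -gradient f x - p • gradient g x - μ • w + v) :
    (p - p₀) * g x + (μ - μ₀) * h x + ⟪x - z, ν⟫ ≤ ⟪x - z, v + s₀⟫ := by
  have hs₀ : s₀ = -(gradient f z + p₀ • gradient g z + μ₀ • w) :=
    eq_neg_of_add_eq_zero_right hkkt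
  have hhx : h x = ⟪x - z, w⟫ := by
    rw [hh] at hhz
    rw [real_inner_comm, inner_sub_right, hh]
    linarith
  have hmono := hf.inner_gradient_sub_gradient_nonneg hx hz hfx hfz
  have hgx_le := hg.apply_add_inner_gradient_sub_le hx hz hgx
  have hgz_le := hg.apply_add_inner_gradient_sub_le hz hx hgz
  rw [← neg_sub x z, inner_neg_right, real_inner_comm] at hgx_le
  rw [real_inner_comm] at hgz_le hmono
  have hp_le := mul_le_mul_of_nonneg_left (hgx_le.trans hgz_nonpos) hp
  have hp₀_le := mul_le_mul_of_nonneg_left hgz_le hp₀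
  rw [hν, hs₀, hhx]
  simp only [inner_add_right, inner_sub_right, inner_neg_right, real_inner_smul_right]
    at hmono ⊢
  linarith

end Gradient

section Laplacian

variable {ι E : Type*} [Fintype ι] [NormedAddCommGroup E] [InnerProductSpace ℝ E]
  {a : ι → ι → ℝ}

/-- The `i`-th block of `(L ⊗ Iₙ) u`, where `L` is the Laplacian of the weights `a`. -/
def weightedLaplacian (a : ι → ι → ℝ) (u : ι → E) (i : ι) : E :=
  ∑ j, a i j • (u i - u j)

theorem sum_smul_sub_eq_neg_weightedLaplacian (u : ι → E) (i : ι) :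
    ∑ j, a i j • (u j - u i) = -weightedLaplacian a u i := by
  simp only [weightedLaplacian, ← sum_neg_distrib, ← smul_neg, neg_sub]

theorem weightedLaplacian_sub (u v : ι → E) (i : ι) :
    weightedLaplacian a (fun j => u j - v j) i =
      weightedLaplacian a u i - weightedLaplacian a v i := by
  simp only [weightedLaplacian, ← sum_sub_distrib, ← smul_sub, sub_sub_sub_comm]

@[simp]
theorem weightedLaplacian_const (z : E) (i : ι) : weightedLaplacian a (fun _ => z) i = 0 := by
  simp [weightedLaplacian]

theorem two_mul_sum_inner_weightedLaplacian (ha : ∀ i j, a i j = a j i) (u v : ι → E) :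
    2 * ∑ i, ⟪u i, weightedLaplacian a v i⟫ = ∑ i, ∑ j, a i j * ⟪u i - u j, v i - v j⟫ := by
  have hswap : ∑ i, ⟪u i, weightedLaplacian a v i⟫ =
      ∑ i, ∑ j, a i j * -⟪u j, v i - v j⟫ := by
    simp only [weightedLaplacian, inner_sum, real_inner_smul_right]
    rw [sum_comm]
    refine sum_congr rfl fun i _ => sum_congr rfl fun j _ => ?_
    rw [ha, ← inner_neg_right, neg_sub]
  calc 2 * ∑ i, ⟪u i, weightedLaplacian a v i⟫
      = ∑ i, ⟪u i, weightedLaplacian a v i⟫ + ∑ i, ∑ j, a i j * -⟪u j, v i - v j⟫ := by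
        rw [← hswap]; ring
    _ = ∑ i, ∑ j, a i j * ⟪u i - u j, v i - v j⟫ := by
        simp only [weightedLaplacian, inner_sum, real_inner_smul_right, ← sum_add_distrib]
        refine sum_congr rfl fun i _ => sum_congr rfl fun j _ => ?_
        rw [inner_sub_left]
        ring

theorem sum_inner_weightedLaplacian_comm (ha : ∀ i j, a i j = a j i) (u v : ι → E) :
    ∑ i, ⟪u i, weightedLaplacian a v i⟫ = ∑ i, ⟪v i, weightedLaplacian a u i⟫ := by
  have huv := two_mul_sum_inner_weightedLaplacian ha u v
  have hvu := two_mul_sum_inner_weightedLaplacian ha v u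
  simp only [real_inner_comm (u _ - u _)] at hvu
  linarith

theorem sum_inner_weightedLaplacian_self_nonneg (ha : ∀ i j, a i j = a j i)
    (ha₀ : ∀ i j, 0 ≤ a i j) (u : ι → E) : 0 ≤ ∑ i, ⟪u i, weightedLaplacian a u i⟫ := by
  have h := two_mul_sum_inner_weightedLaplacian ha u u
  have : 0 ≤ ∑ i, ∑ j, a i j * ⟪u i - u j, u i - u j⟫ :=
    sum_nonneg fun i _ => sum_nonneg fun j _ => mul_nonneg (ha₀ i j) real_inner_self_nonneg
  linarith

theorem sum_inner_coupling_eq_neg_sum_inner_weightedLaplacian (ha : ∀ i j, a i j = a j i)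
    (X Ξ Ξ₀ : ι → E) (z : E) :
    ∑ i, ⟪X i - z, ∑ j, a i j • (X j - X i) - ∑ j, a i j • (Ξ j - Ξ i)
        + ∑ j, a i j • (Ξ₀ j - Ξ₀ i)⟫
      + ∑ i, ⟪Ξ i - Ξ₀ i, ∑ j, a i j • (X j - X i)⟫
      = -∑ i, ⟪X i - z, weightedLaplacian a (fun j => X j - z) i⟫ := by
  have hcomm := sum_inner_weightedLaplacian_comm ha (fun i => X i - z) (fun i => Ξ i - Ξ₀ i)
  simp only [sum_smul_sub_eq_neg_weightedLaplacian, weightedLaplacian_sub,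
    weightedLaplacian_const] at hcomm ⊢
  simp only [inner_add_right, inner_sub_right, inner_neg_right, sum_add_distrib,
    sum_sub_distrib, sum_neg_distrib, sub_zero] at hcomm ⊢
  linarith

end Laplacian

section Storage

variable {E : Type*} [NormedAddCommGroup E] [InnerProductSpace ℝ E] {t : ℝ}

theorem hasDerivAt_multiplier_storage {l μ : ℝ → ℝ} {r q l₀ μ₀ : ℝ}
    (hl : HasDerivAt l (2 * l t * r) t) (hl₀ : l t ≠ 0) (hμ : HasDerivAt μ q t) :
    HasDerivAt (fun s => (l s ^ 2 - l₀ ^ 2) / 4 - l₀ ^ 2 / 2 * (Real.log (l s) - Real.log l₀)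
        + (μ s - μ₀) ^ 2 / 2)
      ((l t ^ 2 - l₀ ^ 2) * r + (μ t - μ₀) * q) t := by
  have := ((((hl.pow 2).sub_const (l₀ ^ 2)).div_const 4).sub
    (((hl.log hl₀).sub_const (Real.log l₀)).const_mul (l₀ ^ 2 / 2))).add
    (((hμ.sub_const μ₀).pow 2).div_const 2)
  refine this.congr_deriv ?_
  field_simp
  ring

theorem HasDerivAt.norm_sub_sq_div {ρ : ℝ → E} {ν : E} {b c : ℝ}
    (hρ : HasDerivAt ρ (-b • ρ t + c • ν) t) (hc : c ≠ 0) (z : E) :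
    HasDerivAt (fun s => ‖ρ s - z‖ ^ 2 / (2 * c))
      (⟪ρ t - z, ν⟫ - b / c * ⟪ρ t - z, ρ t⟫) t := by
  refine ((hρ.sub_const z).norm_sq.div_const (2 * c)).congr_deriv ?_
  simp only [inner_add_right, real_inner_smul_right]
  field_simp
  ring

theorem hasDerivAt_compensator_storage {K : Type*} [Fintype K] [DecidableEq K]
    {ρ : K → ℝ → E} {b c : K → ℝ} {ν z x : E} {k₀ : K}
    (hρ : ∀ k, HasDerivAt (ρ k) (-b k • ρ k t + c k • ν) t) (hb : b k₀ = 0)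
    (hc : ∀ k, c k ≠ 0) (hx : x = ∑ k, ρ k t) :
    HasDerivAt
      (fun s => ‖ρ k₀ s - z‖ ^ 2 / (2 * c k₀) + ∑ k ∈ univ.erase k₀, ‖ρ k s‖ ^ 2 / (2 * c k))
      (⟪x - z, ν⟫ - ∑ k ∈ univ.erase k₀, b k / c k * ‖ρ k t‖ ^ 2) t := by
  have h₀ := (hρ k₀).norm_sub_sq_div (hc k₀) z
  have hk : ∀ k, HasDerivAt (fun s => ‖ρ k s‖ ^ 2 / (2 * c k))
      (⟪ρ k t, ν⟫ - b k / c k * ‖ρ k t‖ ^ 2) t := fun k => by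
    simpa using (hρ k).norm_sub_sq_div (hc k) 0
  refine (h₀.add (HasDerivAt.fun_sum fun k _ => hk k)).congr_deriv ?_
  rw [hb, hx, ← add_sum_erase _ _ (mem_univ k₀), sum_sub_distrib, add_sub_right_comm,
    inner_add_left, sum_inner]
  ring

theorem hasDerivAt_half_mul_sum_norm_sub_sq {ι : Type*} [Fintype ι] {ξ : ι → ℝ → E}
    {ξ' : ι → E} (hξ : ∀ i, HasDerivAt (ξ i) (ξ' i) t) (ξ₀ : ι → E) :
    HasDerivAt (fun s => 1 / 2 * ∑ i, ‖ξ i s - ξ₀ i‖ ^ 2) (∑ i, ⟪ξ i t - ξ₀ i, ξ' i⟫) t := by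
  refine ((HasDerivAt.fun_sum fun i _ => ((hξ i).sub_const (ξ₀ i)).norm_sq).const_mul
    (1 / 2 : ℝ)).congr_deriv ?_
  rw [mul_sum]
  simp

end Storage

theorem lyapunov_derivative_nonpositive_general
    (N n m : ℕ)
    (f g h : Fin N → EuclideanSpace ℝ (Fin n) → ℝ)
    (hvec : Fin N → EuclideanSpace ℝ (Fin n)) (hconst : Fin N → ℝ)
    (h_affine : ∀ i x, h i x = ⟪hvec i, x⟫ + hconst i)
    (hf_conv : ∀ i, ConvexOn ℝ Set.univ (f i))
    (hf_smooth : ∀ i, ContDiff ℝ 2 (f i))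
    (hg_conv : ∀ i, ConvexOn ℝ Set.univ (g i))
    (hg_smooth : ∀ i, ContDiff ℝ 2 (g i))
    (a : Fin N → Fin N → ℝ)
    (ha_symm : ∀ i j, a i j = a j i)
    (ha_nonneg : ∀ i j, 0 ≤ a i j)
    -- the KKT point (★)
    (xstar ξstar : Fin N → EuclideanSpace ℝ (Fin n)) (lstar mstar : Fin N → ℝ)
    (zstar : EuclideanSpace ℝ (Fin n))
    (hkkt_cons : ∀ i, xstar i = zstar)
    (hkkt_h : ∀ i, h i zstar = 0)
    (hkkt_g : ∀ i, g i zstar ≤ 0)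
    (hkkt_slack : ∀ i, (lstar i) ^ 2 * g i zstar = 0)
    (hkkt_grad : ∀ i, gradient (f i) zstar + (lstar i) ^ 2 • gradient (g i) zstar
        + mstar i • hvec i + ∑ j, a i j • (ξstar j - ξstar i) = 0)
    -- compensator coefficients of each agent
    (b c : Fin N → Fin (m + 2) → ℝ)
    (hb0 : ∀ i, b i 0 = 0) (hbmono : ∀ i, StrictMono (b i)) (hc : ∀ i k, 0 < c i k)
    -- trajectories of the compensated primal–dual flow
    (ρ : Fin N → Fin (m + 2) → ℝ → EuclideanSpace ℝ (Fin n))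
    (ξ : Fin N → ℝ → EuclideanSpace ℝ (Fin n))
    (lam mu : Fin N → ℝ → ℝ)
    (x : Fin N → ℝ → EuclideanSpace ℝ (Fin n))
    (hx : ∀ i t, x i t = ∑ k, ρ i k t)
    (ν : Fin N → ℝ → EuclideanSpace ℝ (Fin n))
    (hν : ∀ i t, ν i t = -gradient (f i) (x i t) - (lam i t) ^ 2 • gradient (g i) (x i t)
        - mu i t • hvec i + (∑ j, a i j • (x j t - x i t)) - ∑ j, a i j • (ξ j t - ξ i t))
    (hρ : ∀ i k t, HasDerivAt (ρ i k) (-(b i k) • ρ i k t + c i k • ν i t) t)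
    (hξ : ∀ i t, HasDerivAt (ξ i) (∑ j, a i j • (x j t - x i t)) t)
    (hlam : ∀ i t, HasDerivAt (lam i) (2 * lam i t * g i (x i t)) t)
    (hmu : ∀ i t, HasDerivAt (mu i) (h i (x i t)) t)
    (hlam_pos : ∀ i t, 0 < lam i t)
    -- the Lyapunov function
    (V : ℝ → ℝ)
    (hV : ∀ t, V t =
        (∑ i, (((lam i t) ^ 2 - (lstar i) ^ 2) / 4
            - ((lstar i) ^ 2 / 2) * (Real.log (lam i t) - Real.log (lstar i))
            + (mu i t - mstar i) ^ 2 / 2))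
        + (∑ i, (‖ρ i 0 t - zstar‖ ^ 2 / (2 * c i 0)
            + ∑ k ∈ Finset.univ.erase (0 : Fin (m + 2)), ‖ρ i k t‖ ^ 2 / (2 * c i k)))
        + (1 / 2) * ∑ i, ‖ξ i t - ξstar i‖ ^ 2) :
    ∀ t, ∃ d : ℝ, HasDerivAt V d t ∧
      d ≤ -(∑ i, ⟪x i t - xstar i, ∑ j, a i j • ((x i t - xstar i) - (x j t - xstar j))⟫)
          - ∑ i, ∑ k ∈ Finset.univ.erase (0 : Fin (m + 2)),
              (b i k / c i k) * ‖ρ i k t‖ ^ 2 ∧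
      -(∑ i, ⟪x i t - xstar i, ∑ j, a i j • ((x i t - xstar i) - (x j t - xstar j))⟫)
          - ∑ i, ∑ k ∈ Finset.univ.erase (0 : Fin (m + 2)),
              (b i k / c i k) * ‖ρ i k t‖ ^ 2 ≤ 0 := by
  intro t
  have hderiv : HasDerivAt V
      ((∑ i, ((lam i t ^ 2 - lstar i ^ 2) * g i (x i t) + (mu i t - mstar i) * h i (x i t)))
        + (∑ i, (⟪x i t - zstar, ν i t⟫
            - ∑ k ∈ univ.erase (0 : Fin (m + 2)), b i k / c i k * ‖ρ i k t‖ ^ 2))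
        + ∑ i, ⟪ξ i t - ξstar i, ∑ j, a i j • (x j t - x i t)⟫) t := by
    rw [show V = _ from funext hV]
    exact ((HasDerivAt.fun_sum fun i _ =>
        hasDerivAt_multiplier_storage (hlam i t) (hlam_pos i t).ne' (hmu i t)).add
      (HasDerivAt.fun_sum fun i _ =>
        hasDerivAt_compensator_storage (hρ i · t) (hb0 i) (fun k => (hc i k).ne') (hx i t))).add
      (hasDerivAt_half_mul_sum_norm_sub_sq (hξ · t) ξstar)
  have hdf i := (hf_smooth i).differentiable two_ne_zero
  have hdg i := (hg_smooth i).differentiable two_ne_zero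
  have hagent i := primal_dual_dissipation_le (ν := ν i t) (p := lam i t ^ 2) (μ := mu i t)
    (hf_conv i) (hg_conv i) (Set.mem_univ (x i t)) (Set.mem_univ zstar) (hdf i _) (hdf i _)
    (hdg i _) (hdg i _) (h_affine i) (hkkt_h i) (hkkt_g i) (sq_nonneg _) (sq_nonneg _)
    (hkkt_slack i) (hkkt_grad i) (by rw [hν i t, add_sub_assoc])
  have hcoupling :=
    sum_inner_coupling_eq_neg_sum_inner_weightedLaplacian ha_symm (x · t) (ξ · t) ξstar zstar
  have hR : 0 ≤ ∑ i, ∑ k ∈ univ.erase (0 : Fin (m + 2)), b i k / c i k * ‖ρ i k t‖ ^ 2 :=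
    sum_nonneg fun i _ => sum_nonneg fun k _ =>
      mul_nonneg (div_nonneg (hb0 i ▸ (hbmono i).monotone (Fin.zero_le k)) (hc i k).le)
        (sq_nonneg _)
  have hQ := sum_inner_weightedLaplacian_self_nonneg ha_symm ha_nonneg (x · t - zstar)
  simp only [weightedLaplacian] at hcoupling hQ
  simp only [hkkt_cons]
  refine ⟨_, hderiv, ?_, by linarith⟩
  have hsum := sum_le_sum (s := univ) fun i _ => hagent i
  simp only [sum_add_distrib, sum_sub_distrib] at hsum hcoupling ⊢
  linarith

/-- Along the compensated primal–dual flow of the generalized Lagrangian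
(with phase lead compensators of order `m + 2 ≥ 2` per agent), the Lyapunov function `V`,
built from the logarithmic dual storage, the compensator storage and `½‖ξ - ξ*‖²`, satisfies
`V'(t) ≤ -(x - x*)ᵀ𝐋(x - x*) - Σᵢ Σ_{k≠0} (bᵢₖ/cᵢₖ)‖ρᵢₖ‖² ≤ 0`. -/
theorem lyapunov_derivative_nonpositive
    (N n m : ℕ)
    (f g h : Fin N → EuclideanSpace ℝ (Fin n) → ℝ)
    (hvec : Fin N → EuclideanSpace ℝ (Fin n)) (hconst : Fin N → ℝ)
    (h_affine : ∀ i x, h i x = ⟪hvec i, x⟫ + hconst i)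
    (hf_conv : ∀ i, ConvexOn ℝ Set.univ (f i))
    (hf_smooth : ∀ i, ContDiff ℝ 2 (f i))
    (hg_conv : ∀ i, ConvexOn ℝ Set.univ (g i))
    (hg_smooth : ∀ i, ContDiff ℝ 2 (g i))
    (a : Fin N → Fin N → ℝ)
    (ha_symm : ∀ i j, a i j = a j i)
    (ha_nonneg : ∀ i j, 0 ≤ a i j)
    (ha_diag : ∀ i, a i i = 0)
    -- the KKT point (★)
    (xstar ξstar : Fin N → EuclideanSpace ℝ (Fin n)) (lstar mstar : Fin N → ℝ)
    (zstar : EuclideanSpace ℝ (Fin n))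
    (hkkt_Lx : ∀ i, (∑ j, a i j • (xstar i - xstar j)) = 0)
    (hkkt_cons : ∀ i, xstar i = zstar)
    (hkkt_h : ∀ i, h i zstar = 0)
    (hkkt_g : ∀ i, g i zstar ≤ 0)
    (hkkt_slack : ∀ i, (lstar i) ^ 2 * g i zstar = 0)
    (hkkt_grad : ∀ i, gradient (f i) zstar + (lstar i) ^ 2 • gradient (g i) zstar
        + mstar i • hvec i + ∑ j, a i j • (ξstar j - ξstar i) = 0)
    -- compensator coefficients of each agent
    (b c : Fin N → Fin (m + 2) → ℝ)
    (hb0 : ∀ i, b i 0 = 0) (hbmono : ∀ i, StrictMono (b i)) (hc : ∀ i k, 0 < c i k)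
    -- trajectories of the compensated primal–dual flow
    (ρ : Fin N → Fin (m + 2) → ℝ → EuclideanSpace ℝ (Fin n))
    (ξ : Fin N → ℝ → EuclideanSpace ℝ (Fin n))
    (lam mu : Fin N → ℝ → ℝ)
    (x : Fin N → ℝ → EuclideanSpace ℝ (Fin n))
    (hx : ∀ i t, x i t = ∑ k, ρ i k t)
    (ν : Fin N → ℝ → EuclideanSpace ℝ (Fin n))
    (hν : ∀ i t, ν i t = -gradient (f i) (x i t) - (lam i t) ^ 2 • gradient (g i) (x i t)
        - mu i t • hvec i + (∑ j, a i j • (x j t - x i t)) - ∑ j, a i j • (ξ j t - ξ i t))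
    (hρ : ∀ i k t, HasDerivAt (ρ i k) (-(b i k) • ρ i k t + c i k • ν i t) t)
    (hξ : ∀ i t, HasDerivAt (ξ i) (∑ j, a i j • (x j t - x i t)) t)
    (hlam : ∀ i t, HasDerivAt (lam i) (2 * lam i t * g i (x i t)) t)
    (hmu : ∀ i t, HasDerivAt (mu i) (h i (x i t)) t)
    (hlam_pos : ∀ i t, 0 < lam i t)
    -- the Lyapunov function
    (V : ℝ → ℝ)
    (hV : ∀ t, V t =
        (∑ i, (((lam i t) ^ 2 - (lstar i) ^ 2) / 4
            - ((lstar i) ^ 2 / 2) * (Real.log (lam i t) - Real.log (lstar i))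
            + (mu i t - mstar i) ^ 2 / 2))
        + (∑ i, (‖ρ i 0 t - zstar‖ ^ 2 / (2 * c i 0)
            + ∑ k ∈ Finset.univ.erase (0 : Fin (m + 2)), ‖ρ i k t‖ ^ 2 / (2 * c i k)))
        + (1 / 2) * ∑ i, ‖ξ i t - ξstar i‖ ^ 2) :
    ∀ t, ∃ d : ℝ, HasDerivAt V d t ∧
      d ≤ -(∑ i, ⟪x i t - xstar i, ∑ j, a i j • ((x i t - xstar i) - (x j t - xstar j))⟫)
          - ∑ i, ∑ k ∈ Finset.univ.erase (0 : Fin (m + 2)),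
              (b i k / c i k) * ‖ρ i k t‖ ^ 2 ∧
      -(∑ i, ⟪x i t - xstar i, ∑ j, a i j • ((x i t - xstar i) - (x j t - xstar j))⟫)
          - ∑ i, ∑ k ∈ Finset.univ.erase (0 : Fin (m + 2)),
              (b i k / c i k) * ‖ρ i k t‖ ^ 2 ≤ 0 :=
  lyapunov_derivative_nonpositive_general N n m f g h hvec hconst h_affine hf_conv hf_smooth hg_conv
    hg_smooth a ha_symm ha_nonneg xstar ξstar lstar mstar zstar hkkt_cons hkkt_h hkkt_g hkkt_slack
    hkkt_grad b c hb0 hbmono hc ρ ξ lam mu x hx ν hν hρ hξ hlam hmu hlam_pos V hV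
end
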